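/- arXiv:2605.01103 — 2 statements merged into one kernel-verified Lean document; each statement's English description precedes it below -/
import Mathlib

section
/- Let ħ > 0 and let Σ be a real symmetric positive definite 2n×2n matrix, with covariance ellipsoid Ω_Σ = {z ∈ ℝ^{2n} : (1/2)Σ⁻¹z·z ≤ 1}. Then the complex Hermitian matrix Σ + (iħ/2)J is positive semidefinite if and only if Ω_Σ contains a quantum blob, i.e. if and only if there exists S ∈ Sp(2n,ℝ) with S(B^{2n}(√ħ)) ⊆ Ω_Σ. -/
open Matrix
open scoped ComplexOrder

noncomputable section

set_option linter.unusedSectionVars false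
set_option linter.unusedVariables false
set_option linter.unusedTactic false
set_option linter.unnecessarySeqFocus false
set_option maxHeartbeats 1600000

section Aux

variable {ι : Type*} [Fintype ι] [DecidableEq ι]

lemma dot_self_nonneg' (a : ι → ℝ) : 0 ≤ a ⬝ᵥ a :=
  Finset.sum_nonneg fun i _ => mul_self_nonneg _

lemma dot_cs' (a b : ι → ℝ) : (a ⬝ᵥ b) ^ 2 ≤ (a ⬝ᵥ a) * (b ⬝ᵥ b) := by
  have := Finset.sum_mul_sq_le_sq_mul_sq Finset.univ a b
  simpa [dotProduct, pow_two, mul_comm] using this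

lemma skew_dot' {M : Matrix ι ι ℝ} (hM : Mᵀ = -M) (a b : ι → ℝ) :
    a ⬝ᵥ M *ᵥ b = -((M *ᵥ a) ⬝ᵥ b) := by
  rw [dotProduct_mulVec, ← Matrix.mulVec_transpose, hM, Matrix.neg_mulVec, neg_dotProduct]

lemma sym_dot' {M : Matrix ι ι ℝ} (hM : Mᵀ = M) (a b : ι → ℝ) :
    a ⬝ᵥ M *ᵥ b = (M *ᵥ a) ⬝ᵥ b := by
  rw [dotProduct_mulVec, ← Matrix.mulVec_transpose, hM]

lemma dotC' (a b : ι → ℝ) :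
    (fun i => ((a i : ℝ) : ℂ)) ⬝ᵥ (fun i => ((b i : ℝ) : ℂ)) = ((a ⬝ᵥ b : ℝ) : ℂ) := by
  simp [dotProduct, Complex.ofReal_sum, Complex.ofReal_mul]

lemma mulVecC' (M : Matrix ι ι ℝ) (a : ι → ℝ) :
    (M.map Complex.ofReal) *ᵥ (fun i => ((a i : ℝ) : ℂ)) = fun i => (((M *ᵥ a) i : ℝ) : ℂ) := by
  funext i
  rw [show ((((M *ᵥ a) i : ℝ)) : ℂ) = Complex.ofRealHom ((M *ᵥ a) i) from rfl,
    RingHom.map_mulVec]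
  rfl

lemma mapC_mul' (P Q : Matrix ι ι ℝ) :
    (P * Q).map Complex.ofReal = P.map Complex.ofReal * Q.map Complex.ofReal :=
  Matrix.map_mul (f := Complex.ofRealHom)

lemma mapC_add' (P Q : Matrix ι ι ℝ) :
    (P + Q).map Complex.ofReal = P.map Complex.ofReal + Q.map Complex.ofReal := by
  ext i j; simp

lemma mapC_sub' (P Q : Matrix ι ι ℝ) :
    (P - Q).map Complex.ofReal = P.map Complex.ofReal - Q.map Complex.ofReal := by
  ext i j; simp

lemma mapC_one' : (1 : Matrix ι ι ℝ).map Complex.ofReal = 1 := by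
  ext i j; by_cases h : i = j <;> simp [Matrix.one_apply, h]

lemma mapC_neg_one' : (-1 : Matrix ι ι ℝ).map Complex.ofReal = -1 := by
  ext i j; by_cases h : i = j <;> simp [Matrix.one_apply, h]

lemma mapC_smul' (r : ℝ) (P : Matrix ι ι ℝ) :
    (r • P).map Complex.ofReal = ((r : ℝ) : ℂ) • P.map Complex.ofReal := by
  ext i j; simp

lemma mapC_conjT' (P : Matrix ι ι ℝ) :
    (P.map Complex.ofReal)ᴴ = Pᵀ.map Complex.ofReal := by
  ext i j; simp [Matrix.conjTranspose_apply, Complex.conj_ofReal]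

lemma psd_mapC' {P : Matrix ι ι ℝ} (hP : P.PosSemidef) :
    (P.map Complex.ofReal).PosSemidef := by
  have hsym : Pᵀ = P := by
    have := hP.1
    rwa [Matrix.IsHermitian, Matrix.conjTranspose_eq_transpose_of_trivial] at this
  rw [Matrix.posSemidef_iff_dotProduct_mulVec]
  constructor
  · rw [Matrix.IsHermitian, mapC_conjT', hsym]
  · intro x
    set xr : ι → ℝ := fun i => (x i).re with hxr
    set xi : ι → ℝ := fun i => (x i).im with hxi
    have hx : x = (fun i => ((xr i : ℝ) : ℂ)) + Complex.I • (fun i => ((xi i : ℝ) : ℂ)) := by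
      funext i
      simp [hxr, hxi, Complex.ext_iff]
    have hstar : star x = (fun i => ((xr i : ℝ) : ℂ)) - Complex.I • (fun i => ((xi i : ℝ) : ℂ)) := by
      rw [hx]
      funext i
      simp [Complex.ext_iff]
    have hsymdot : xi ⬝ᵥ (P *ᵥ xr) = xr ⬝ᵥ (P *ᵥ xi) := by
      rw [sym_dot' hsym, dotProduct_comm]
    have hq1 := hP.dotProduct_mulVec_nonneg xr
    have hq2 := hP.dotProduct_mulVec_nonneg xi
    rw [star_trivial] at hq1 hq2
    rw [hstar, hx]
    rw [Matrix.mulVec_add, Matrix.mulVec_smul, mulVecC', mulVecC']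
    simp only [dotProduct_add, dotProduct_smul, sub_dotProduct, smul_dotProduct, dotC']
    have hval : ((xr ⬝ᵥ P *ᵥ xr : ℝ) : ℂ) - Complex.I * ((xi ⬝ᵥ P *ᵥ xr : ℝ) : ℂ)
        + Complex.I * (((xr ⬝ᵥ P *ᵥ xi : ℝ) : ℂ) - Complex.I * ((xi ⬝ᵥ P *ᵥ xi : ℝ) : ℂ))
        = (((xr ⬝ᵥ P *ᵥ xr) + (xi ⬝ᵥ P *ᵥ xi) : ℝ) : ℂ) := by
      rw [hsymdot]
      push_cast
      ring_nf
      rw [Complex.I_sq]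
      ring
    rw [smul_eq_mul, smul_eq_mul, smul_eq_mul, hval]
    rw [Complex.zero_le_real]
    positivity

lemma _root_.Matrix.PosSemidef.sqrt_aux_spec {A : Matrix ι ι ℝ} (hA : A.PosSemidef) :
    A = (hA.1.eigenvectorUnitary.1 : Matrix ι ι ℝ)
      * Matrix.diagonal (RCLike.ofReal ∘ hA.1.eigenvalues : ι → ℝ)
      * star (hA.1.eigenvectorUnitary.1 : Matrix ι ι ℝ) := by
  have := hA.1.spectral_theorem
  rwa [Unitary.conjStarAlgAut_apply] at this

/-- square root of a real positive semidefinite matrix -/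
def _root_.Matrix.PosSemidef.sqrt {A : Matrix ι ι ℝ} (hA : A.PosSemidef) : Matrix ι ι ℝ :=
  (hA.1.eigenvectorUnitary.1 : Matrix ι ι ℝ)
    * Matrix.diagonal (RCLike.ofReal ∘ Real.sqrt ∘ hA.1.eigenvalues : ι → ℝ)
    * star (hA.1.eigenvectorUnitary.1 : Matrix ι ι ℝ)

lemma _root_.Matrix.PosSemidef.posSemidef_sqrt {A : Matrix ι ι ℝ} (hA : A.PosSemidef) :
    hA.sqrt.PosSemidef := by
  have hd : (Matrix.diagonal (RCLike.ofReal ∘ Real.sqrt ∘ hA.1.eigenvalues : ι → ℝ)).PosSemidef :=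
    Matrix.PosSemidef.diagonal (fun i => by simp [Real.sqrt_nonneg])
  exact hd.mul_mul_conjTranspose_same _

lemma _root_.Matrix.PosSemidef.sqrt_mul_self {A : Matrix ι ι ℝ} (hA : A.PosSemidef) :
    hA.sqrt * hA.sqrt = A := by
  have hspec := hA.sqrt_aux_spec
  set V : Matrix ι ι ℝ := hA.1.eigenvectorUnitary.1 with hV
  have hVs : star V * V = 1 := mem_unitaryGroup_iff'.mp hA.1.eigenvectorUnitary.2
  have hEE : Matrix.diagonal (RCLike.ofReal ∘ Real.sqrt ∘ hA.1.eigenvalues : ι → ℝ)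
      * Matrix.diagonal (RCLike.ofReal ∘ Real.sqrt ∘ hA.1.eigenvalues : ι → ℝ)
      = Matrix.diagonal (RCLike.ofReal ∘ hA.1.eigenvalues : ι → ℝ) := by
    rw [Matrix.diagonal_mul_diagonal]
    congr 1
    funext i
    simp [Real.mul_self_sqrt (hA.eigenvalues_nonneg i)]
  unfold Matrix.PosSemidef.sqrt
  rw [← hV]
  conv_rhs => rw [hspec]
  simp only [Matrix.mul_assoc]
  rw [← Matrix.mul_assoc (star V) V, hVs, Matrix.one_mul, ← Matrix.mul_assoc _ _ (star V), hEE]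

lemma commute_sqrt' {A C : Matrix ι ι ℝ} (hA : A.PosSemidef)
    (h : C * A = A * C) : C * hA.sqrt = hA.sqrt * C := by
  set V : Matrix ι ι ℝ := hA.1.eigenvectorUnitary.1 with hV
  have hVs : star V * V = 1 := mem_unitaryGroup_iff'.mp hA.1.eigenvectorUnitary.2
  have hVs' : V * star V = 1 := mem_unitaryGroup_iff.mp hA.1.eigenvectorUnitary.2
  have c1 : ∀ X : Matrix ι ι ℝ, star V * (V * X) = X := fun X => by
    rw [← Matrix.mul_assoc, hVs, Matrix.one_mul]
  have c2 : ∀ X : Matrix ι ι ℝ, V * (star V * X) = X := fun X => by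
    rw [← Matrix.mul_assoc, hVs', Matrix.one_mul]
  set d : ι → ℝ := hA.1.eigenvalues with hd
  set D := Matrix.diagonal (RCLike.ofReal ∘ d : ι → ℝ) with hD
  set E := Matrix.diagonal (RCLike.ofReal ∘ Real.sqrt ∘ d : ι → ℝ) with hE
  have hspec : A = V * D * star V := hA.sqrt_aux_spec
  set C' : Matrix ι ι ℝ := star V * C * V with hC'
  have hcomm : C' * D = D * C' := by
    have h1 : star V * ((C * A) * V) = star V * ((A * C) * V) := by rw [h]
    rw [hspec] at h1
    simp only [Matrix.mul_assoc, c1, c2] at h1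
    calc C' * D = star V * (C * (V * D)) := by rw [hC']; simp only [Matrix.mul_assoc]
      _ = star V * (C * (V * (D * (star V * V)))) := by rw [hVs, Matrix.mul_one]
      _ = D * C' := by
          rw [hC']
          simp only [Matrix.mul_assoc]
          rw [h1]
  have key : C' * E = E * C' := by
    ext i j
    have hij := congrFun (congrFun hcomm i) j
    simp only [hD, hE, Matrix.mul_diagonal, Matrix.diagonal_mul, Function.comp_apply,
      RCLike.ofReal_real_eq_id, id_eq] at hij ⊢
    rcases eq_or_ne (C' i j) 0 with h0 | h0
    · simp [h0]
    · have hdd : d j = d i := by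
        have h2 : C' i j * d j = C' i j * d i := by rw [hij]; ring
        exact mul_left_cancel₀ h0 h2
      rw [hdd, mul_comm]
  have hsqrt : hA.sqrt = V * E * star V := rfl
  have hCV : C * V = V * C' := by rw [hC']; simp only [Matrix.mul_assoc, c2]
  calc C * hA.sqrt = C * V * E * star V := by rw [hsqrt]; simp only [Matrix.mul_assoc]
    _ = V * (C' * E) * star V := by rw [hCV]; simp only [Matrix.mul_assoc]
    _ = V * E * (C' * star V) := by rw [key]; simp only [Matrix.mul_assoc]
    _ = hA.sqrt * C := by
        rw [hsqrt, hC']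
        simp only [Matrix.mul_assoc, c2, hVs', Matrix.mul_one]


end Aux

/-- The standard symplectic matrix `J = [[0, I],[-I, 0]]` on `ℝⁿ × ℝⁿ`. -/
def stdJ (n : ℕ) : Matrix (Fin n ⊕ Fin n) (Fin n ⊕ Fin n) ℝ :=
  Matrix.fromBlocks 0 1 (-1) 0

lemma exists_ortho_u {n : ℕ} (K : Matrix (Fin n ⊕ Fin n) (Fin n ⊕ Fin n) ℝ)
    (hKK : ∀ a : Fin n ⊕ Fin n → ℝ, K *ᵥ (K *ᵥ a) = -a)
    (hKdot : ∀ a b : Fin n ⊕ Fin n → ℝ, a ⬝ᵥ (K *ᵥ b) = -((K *ᵥ a) ⬝ᵥ b))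
    (hKKdot : ∀ a b : Fin n ⊕ Fin n → ℝ, (K *ᵥ a) ⬝ᵥ (K *ᵥ b) = a ⬝ᵥ b) :
    ∃ u : Fin n → (Fin n ⊕ Fin n → ℝ),
      (∀ j k, u j ⬝ᵥ u k = if j = k then 1 else 0) ∧
      (∀ j k, u j ⬝ᵥ (K *ᵥ u k) = 0) := by
  classical
  set T : EuclideanSpace ℝ (Fin n ⊕ Fin n) →ₗ[ℝ] EuclideanSpace ℝ (Fin n ⊕ Fin n) :=
    Matrix.toEuclideanLin K with hT
  have hTapp : ∀ v : EuclideanSpace ℝ (Fin n ⊕ Fin n),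
      (WithLp.equiv 2 _) (T v) = K *ᵥ ((WithLp.equiv 2 _) v) := by
    intro v
    rw [hT, Matrix.toEuclideanLin_apply]; rfl
  have hinner : ∀ x y : EuclideanSpace ℝ (Fin n ⊕ Fin n), (inner ℝ x y : ℝ)
      = ((WithLp.equiv 2 _) x) ⬝ᵥ ((WithLp.equiv 2 _) y) := by
    intro x y
    simp [PiLp.inner_apply, RCLike.inner_apply, conj_trivial, dotProduct,
      WithLp.equiv_apply, mul_comm]
  have hT2 : ∀ x : EuclideanSpace ℝ (Fin n ⊕ Fin n), T (T x) = -x := by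
    intro x
    apply (WithLp.equiv 2 _).injective
    rw [hTapp, hTapp, hKK]; rfl
  have hTskew : ∀ x y : EuclideanSpace ℝ (Fin n ⊕ Fin n),
      (inner ℝ (T x) y : ℝ) = -(inner ℝ x (T y) : ℝ) := by
    intro x y
    rw [hinner, hinner, hTapp, hTapp, hKdot, neg_neg]
  have hTorth : ∀ x y : EuclideanSpace ℝ (Fin n ⊕ Fin n),
      (inner ℝ (T x) (T y) : ℝ) = (inner ℝ x y : ℝ) := by
    intro x y
    rw [hinner, hinner, hTapp, hTapp, hKKdot]
  have hTx : ∀ x : EuclideanSpace ℝ (Fin n ⊕ Fin n), (inner ℝ x (T x) : ℝ) = 0 := by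
    intro x
    have h1 := hTskew x x
    have h2 : (inner ℝ (T x) x : ℝ) = inner ℝ x (T x) := real_inner_comm _ _
    linarith
  letI smulC : SMul ℂ (EuclideanSpace ℝ (Fin n ⊕ Fin n)) :=
    ⟨fun c v => c.re • v + c.im • T v⟩
  have hsmul : ∀ (c : ℂ) (v : EuclideanSpace ℝ (Fin n ⊕ Fin n)),
      c • v = c.re • v + c.im • T v := fun _ _ => rfl
  letI : Module ℂ (EuclideanSpace ℝ (Fin n ⊕ Fin n)) := Module.ofMinimalAxioms
    (fun c x y => by
      simp only [hsmul, _root_.map_add, smul_add]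
      module)
    (fun c d x => by
      simp only [hsmul, Complex.add_re, Complex.add_im]
      module)
    (fun c d x => by
      simp only [hsmul, _root_.map_add, _root_.map_smul, smul_add, smul_smul,
        Complex.mul_re, Complex.mul_im, hT2]
      module)
    (fun x => by simp [hsmul])
  letI : NormedSpace ℂ (EuclideanSpace ℝ (Fin n ⊕ Fin n)) := by
    refine ⟨fun c v => le_of_eq ?_⟩
    have h : ‖c • v‖ ^ 2 = (‖c‖ * ‖v‖) ^ 2 := by
      rw [← real_inner_self_eq_norm_sq, hsmul, real_inner_add_add_self]
      rw [real_inner_smul_left, real_inner_smul_left, real_inner_smul_left,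
        real_inner_smul_right, real_inner_smul_right, real_inner_smul_right]
      rw [hTx, hTorth, real_inner_self_eq_norm_sq]
      have hc : ‖c‖ ^ 2 = c.re ^ 2 + c.im ^ 2 := by
        rw [Complex.sq_norm, Complex.normSq_apply]
        ring
      rw [mul_pow, hc]
      ring
    have h1 := congrArg Real.sqrt h
    rwa [Real.sqrt_sq (norm_nonneg _), Real.sqrt_sq (by positivity)] at h1
  letI innerC : Inner ℂ (EuclideanSpace ℝ (Fin n ⊕ Fin n)) :=
    ⟨fun x y => ((inner ℝ x y : ℝ) : ℂ) - Complex.I * ((inner ℝ x (T y) : ℝ) : ℂ)⟩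
  have hic : ∀ x y : EuclideanSpace ℝ (Fin n ⊕ Fin n), (inner ℂ x y : ℂ)
      = ((inner ℝ x y : ℝ) : ℂ) - Complex.I * ((inner ℝ x (T y) : ℝ) : ℂ) := fun _ _ => rfl
  letI : InnerProductSpace ℂ (EuclideanSpace ℝ (Fin n ⊕ Fin n)) :=
    { norm_sq_eq_re_inner := fun x => by
        have h0 : (inner ℂ x x : ℂ) = ((inner ℝ x x : ℝ) : ℂ) := by
          rw [hic, hTx]
          simp
        rw [h0, real_inner_self_eq_norm_sq]
        simp [← Complex.ofReal_pow]
      conj_inner_symm := fun x y => by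
        rw [hic, hic]
        have h1 : (inner ℝ y x : ℝ) = inner ℝ x y := real_inner_comm _ _
        have h2 : (inner ℝ y (T x) : ℝ) = -(inner ℝ x (T y) : ℝ) := by
          rw [real_inner_comm, hTskew]
        rw [h1, h2]
        simp only [_root_.map_sub, _root_.map_mul, _root_.map_neg, Complex.conj_I,
          Complex.conj_ofReal, Complex.ofReal_neg]
        ring
      add_left := fun x x' y => by
        simp only [hic, inner_add_left]
        push_cast
        ring
      smul_left := fun x y c => by
        simp only [hic, hsmul, inner_add_left, real_inner_smul_left]
        have h1 : (inner ℝ (T x) y : ℝ) = -(inner ℝ x (T y) : ℝ) := hTskew x y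
        have h2 : (inner ℝ (T x) (T y) : ℝ) = (inner ℝ x y : ℝ) := hTorth x y
        rw [h1, h2]
        apply Complex.ext <;>
          simp only [Complex.add_re, Complex.add_im, Complex.sub_re, Complex.sub_im,
            Complex.mul_re, Complex.mul_im, Complex.I_re, Complex.I_im, Complex.ofReal_re,
            Complex.ofReal_im, Complex.conj_re, Complex.conj_im, Complex.ofReal_add,
            Complex.ofReal_mul, Complex.ofReal_neg, Complex.neg_re, Complex.neg_im] <;>
          ring }
  letI : IsScalarTower ℝ ℂ (EuclideanSpace ℝ (Fin n ⊕ Fin n)) := by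
    refine ⟨fun r c v => ?_⟩
    have h0 : (r • c) • v = (r • c).re • v + (r • c).im • T v := hsmul _ _
    rw [h0, hsmul]
    simp only [Complex.real_smul, Complex.mul_re, Complex.mul_im, Complex.ofReal_re,
      Complex.ofReal_im]
    module
  haveI : FiniteDimensional ℂ (EuclideanSpace ℝ (Fin n ⊕ Fin n)) :=
    FiniteDimensional.right ℝ ℂ _
  have hrank : Module.finrank ℂ (EuclideanSpace ℝ (Fin n ⊕ Fin n)) = n := by
    have h1 := Module.finrank_mul_finrank ℝ ℂ (EuclideanSpace ℝ (Fin n ⊕ Fin n))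
    rw [Complex.finrank_real_complex] at h1
    have h2 : Module.finrank ℝ (EuclideanSpace ℝ (Fin n ⊕ Fin n)) = n + n := by
      rw [finrank_euclideanSpace]
      simp
    omega
  set b := (stdOrthonormalBasis ℂ (EuclideanSpace ℝ (Fin n ⊕ Fin n))).reindex
    (finCongr hrank) with hb
  have hortho := b.orthonormal
  rw [orthonormal_iff_ite] at hortho
  have hpair : ∀ j k, (inner ℝ (b j) (b k) : ℝ) = (if j = k then 1 else 0)
      ∧ (inner ℝ (b j) (T (b k)) : ℝ) = 0 := by
    intro j k
    have h := hortho j k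
    rw [hic, Complex.ext_iff] at h
    obtain ⟨hre, him⟩ := h
    simp only [Complex.sub_re, Complex.sub_im, Complex.mul_re, Complex.mul_im, Complex.I_re,
      Complex.I_im, Complex.ofReal_re, Complex.ofReal_im, zero_mul, one_mul, mul_zero,
      sub_zero, zero_sub, neg_zero, neg_neg, zero_add, add_zero,
      apply_ite Complex.re, apply_ite Complex.im, Complex.one_re, Complex.one_im,
      Complex.zero_re, Complex.zero_im] at hre him
    constructor
    · rw [hre]
    · have : (if j = k then (0:ℝ) else 0) = 0 := by simp
      rw [this] at him
      linarith
  have hb1 : ∀ j k, (inner ℝ (b j) (b k) : ℝ) = if j = k then 1 else 0 := fun j k => (hpair j k).1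
  have hb2 : ∀ j k, (inner ℝ (b j) (T (b k)) : ℝ) = 0 := fun j k => (hpair j k).2
  refine ⟨fun k => (WithLp.equiv 2 _) (b k), ?_, ?_⟩
  · intro j k
    rw [← hinner, hb1]
  · intro j k
    rw [← hTapp, ← hinner, hb2]

lemma exists_orthogonal_conj {n : ℕ} (K : Matrix (Fin n ⊕ Fin n) (Fin n ⊕ Fin n) ℝ)
    (hskew : Kᵀ = -K) (hK2 : K * K = -1) :
    ∃ W : Matrix (Fin n ⊕ Fin n) (Fin n ⊕ Fin n) ℝ, Wᵀ * W = 1 ∧ W * stdJ n * Wᵀ = K := by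
  classical
  have hKK : ∀ a : Fin n ⊕ Fin n → ℝ, K *ᵥ (K *ᵥ a) = -a := by
    intro a
    rw [Matrix.mulVec_mulVec, hK2, Matrix.neg_mulVec, Matrix.one_mulVec]
  have hKdot : ∀ a b : Fin n ⊕ Fin n → ℝ, a ⬝ᵥ (K *ᵥ b) = -((K *ᵥ a) ⬝ᵥ b) := skew_dot' hskew
  have hKKdot : ∀ a b : Fin n ⊕ Fin n → ℝ, (K *ᵥ a) ⬝ᵥ (K *ᵥ b) = a ⬝ᵥ b := by
    intro a b
    have h := hKdot a (K *ᵥ b)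
    rw [hKK, dotProduct_neg] at h
    linarith
  obtain ⟨u, hu1, hu2⟩ := exists_ortho_u K hKK hKdot hKKdot
  set w : (Fin n ⊕ Fin n) → (Fin n ⊕ Fin n → ℝ) :=
    Sum.elim u (fun k => -(K *ᵥ u k)) with hw
  have hwdot : ∀ j k, w j ⬝ᵥ w k = if j = k then 1 else 0 := by
    intro j k
    rcases j with a | a <;> rcases k with b | b <;>
      simp only [hw, Sum.elim_inl, Sum.elim_inr]
    · simpa using hu1 a b
    · rw [dotProduct_neg, hu2, neg_zero]; simp
    · rw [neg_dotProduct, ← hKdot, hu2]; simp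
    · rw [neg_dotProduct, dotProduct_neg, neg_neg, hKKdot]
      simpa using hu1 a b
  have horth : (Matrix.of fun i j => w j i)ᵀ * (Matrix.of fun i j => w j i) = 1 := by
    ext j k
    rw [Matrix.mul_apply]
    simp only [Matrix.transpose_apply, Matrix.of_apply]
    have h0 : ∑ i, w j i * w k i = w j ⬝ᵥ w k := rfl
    rw [h0, hwdot]
    simp [Matrix.one_apply]
  refine ⟨Matrix.of fun i j => w j i, horth, ?_⟩
  have hWW : (Matrix.of fun i j => w j i) * (Matrix.of fun i j => w j i)ᵀ = 1 := by
    rw [mul_eq_one_comm]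
    exact horth
  have hWJ : (Matrix.of fun i j => w j i) * stdJ n = K * (Matrix.of fun i j => w j i) := by
    ext i j
    rw [Matrix.mul_apply, Matrix.mul_apply]
    rcases j with k | k
    · have hL : ∑ t, (Matrix.of fun i j => w j i) i t * stdJ n t (Sum.inl k)
          = (K *ᵥ u k) i := by
        rw [Fintype.sum_sum_type]
        simp [stdJ, hw, Matrix.one_apply]
      rw [hL]
      have hR : ∑ t, K i t * (Matrix.of fun i j => w j i) t (Sum.inl k)
          = (K *ᵥ u k) i := by
        simp [Matrix.mulVec, dotProduct, hw]
      rw [hR]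
    · have hL : ∑ t, (Matrix.of fun i j => w j i) i t * stdJ n t (Sum.inr k)
          = u k i := by
        rw [Fintype.sum_sum_type]
        simp [stdJ, hw, Matrix.one_apply]
      rw [hL]
      have hR : ∑ t, K i t * (Matrix.of fun i j => w j i) t (Sum.inr k)
          = u k i := by
        have h0 : ∑ t, K i t * (Matrix.of fun i j => w j i) t (Sum.inr k)
            = (K *ᵥ (-(K *ᵥ u k))) i := by
          simp [Matrix.mulVec, dotProduct, hw]
        rw [h0, Matrix.mulVec_neg, hKK]
        simp
      rw [hR]
  calc (Matrix.of fun i j => w j i) * stdJ n * (Matrix.of fun i j => w j i)ᵀ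
      = K * ((Matrix.of fun i j => w j i) * (Matrix.of fun i j => w j i)ᵀ) := by
        rw [← Matrix.mul_assoc, hWJ, Matrix.mul_assoc]
    _ = K := by rw [hWW, Matrix.mul_one]

/-- `S ∈ Sp(2n, ℝ)` iff `Sᵀ J S = J`. -/
def IsSymplectic {n : ℕ} (S : Matrix (Fin n ⊕ Fin n) (Fin n ⊕ Fin n) ℝ) : Prop :=
  Sᵀ * stdJ n * S = stdJ n

/-- The closed ball of radius `r` centered at `0` in phase space `ℝⁿ × ℝⁿ`. -/
def ballPhase (n : ℕ) (r : ℝ) : Set ((Fin n ⊕ Fin n) → ℝ) :=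
  {z | ∑ i, z i ^ 2 ≤ r ^ 2}

/-- The quantum condition `Σ + (iℏ/2)J ≥ 0` on a symmetric positive definite covariance
matrix `Σ` holds iff the covariance ellipsoid `Ω_Σ = {z : (1/2)Σ⁻¹z·z ≤ 1}` contains a
quantum blob `S(B^{2n}(√ℏ))`, `S ∈ Sp(2n,ℝ)`. -/
theorem statement18 (n : ℕ) (ℏ : ℝ) (hℏ : 0 < ℏ)
    (Sig : Matrix (Fin n ⊕ Fin n) (Fin n ⊕ Fin n) ℝ) (hSig : Sig.PosDef) :
    (Sig.map Complex.ofReal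
        + (Complex.I * (ℏ : ℂ) / 2) • (stdJ n).map Complex.ofReal).PosSemidef ↔
      ∃ S : Matrix (Fin n ⊕ Fin n) (Fin n ⊕ Fin n) ℝ, IsSymplectic S ∧
        S.mulVec '' ballPhase n (Real.sqrt ℏ)
          ⊆ {z : (Fin n ⊕ Fin n) → ℝ | (1 / 2 : ℝ) * (Sig⁻¹.mulVec z ⬝ᵥ z) ≤ 1} := by
  classical
  have hJskew : (stdJ n)ᵀ = -(stdJ n) := by
    simp [stdJ, Matrix.fromBlocks_transpose, Matrix.fromBlocks_neg]
  have hJ2 : stdJ n * stdJ n = -1 := by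
    have h1 : (1 : Matrix (Fin n ⊕ Fin n) (Fin n ⊕ Fin n) ℝ) = Matrix.fromBlocks 1 0 0 1 :=
      Matrix.fromBlocks_one.symm
    rw [stdJ, Matrix.fromBlocks_multiply, show (-1 : Matrix (Fin n ⊕ Fin n) (Fin n ⊕ Fin n) ℝ)
      = -(Matrix.fromBlocks 1 0 0 1) from by rw [← h1], Matrix.fromBlocks_neg]
    congr 1 <;> simp
  have hJinv : stdJ n * (-(stdJ n)) = 1 := by rw [Matrix.mul_neg, hJ2, neg_neg]
  have hJinv' : (-(stdJ n)) * stdJ n = 1 := by rw [Matrix.neg_mul, hJ2, neg_neg]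
  have hdetJ : (stdJ n).det ≠ 0 := Matrix.det_ne_zero_of_right_inverse hJinv
  -- square root of Sig
  have hAps : _ := hSig.posSemidef.posSemidef_sqrt
  set A := hSig.posSemidef.sqrt with hA
  have hAA : A * A = Sig := hSig.posSemidef.sqrt_mul_self
  have hAsym : Aᵀ = A := by
    have h := hAps.1
    rwa [Matrix.IsHermitian, Matrix.conjTranspose_eq_transpose_of_trivial] at h
  have hSigSym : Sigᵀ = Sig := by
    have h := hSig.1
    rwa [Matrix.IsHermitian, Matrix.conjTranspose_eq_transpose_of_trivial] at h
  have hdetSig : Sig.det ≠ 0 := ne_of_gt hSig.det_pos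
  have hdetA : IsUnit A.det := by
    rw [isUnit_iff_ne_zero]
    intro h0
    apply hdetSig
    rw [← hAA, Matrix.det_mul, h0, zero_mul]
  clear_value A
  set G := A⁻¹ with hG
  have hGA : G * A = 1 := Matrix.nonsing_inv_mul A hdetA
  have hAG : A * G = 1 := Matrix.mul_nonsing_inv A hdetA
  have hGsym : Gᵀ = G := by rw [hG, Matrix.transpose_nonsing_inv, hAsym]
  have hdetG : G.det ≠ 0 := Matrix.det_ne_zero_of_left_inverse hAG
  have hSigInv : Sig⁻¹ = G * G := by rw [← hAA, Matrix.mul_inv_rev]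
  clear_value G
  -- quadratic form identity
  have hquad : ∀ v : (Fin n ⊕ Fin n) → ℝ,
      Sig⁻¹ *ᵥ v ⬝ᵥ v = (G *ᵥ v) ⬝ᵥ (G *ᵥ v) := by
    intro v
    rw [hSigInv, ← Matrix.mulVec_mulVec]
    exact (sym_dot' hGsym (G *ᵥ v) v).symm
  have hball : ∀ z : (Fin n ⊕ Fin n) → ℝ,
      z ∈ ballPhase n (Real.sqrt ℏ) ↔ z ⬝ᵥ z ≤ ℏ := by
    intro z
    unfold ballPhase
    rw [Set.mem_setOf_eq, Real.sq_sqrt hℏ.le]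
    simp [dotProduct, pow_two]
  set M := G * stdJ n * G with hM
  have hMskew : Mᵀ = -M := by
    rw [hM, Matrix.transpose_mul, Matrix.transpose_mul, hGsym, hJskew]
    simp [Matrix.mul_assoc, Matrix.mul_neg, Matrix.neg_mul]
  have hdetM : M.det ≠ 0 := by
    rw [hM, Matrix.det_mul, Matrix.det_mul]
    exact mul_ne_zero (mul_ne_zero hdetG hdetJ) hdetG
  clear_value M
  constructor
  · -- forward direction
    intro h
    have hGcH : ((G.map Complex.ofReal))ᴴ = G.map Complex.ofReal := by
      rw [mapC_conjT', hGsym]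
    have h2 := h.mul_mul_conjTranspose_same (G.map Complex.ofReal)
    have hGSigG : G * Sig * G = 1 := by
      calc G * Sig * G = G * (A * (A * G)) := by
            rw [← hAA]; simp only [Matrix.mul_assoc]
        _ = 1 := by rw [hAG, Matrix.mul_one, hGA]
    have hconj : G.map Complex.ofReal
        * (Sig.map Complex.ofReal + (Complex.I * (ℏ:ℂ)/2) • (stdJ n).map Complex.ofReal)
        * (G.map Complex.ofReal)ᴴ
        = 1 + (Complex.I * (ℏ:ℂ)/2) • M.map Complex.ofReal := by
      rw [hGcH, Matrix.mul_add, Matrix.add_mul]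
      congr 1
      · rw [← mapC_mul', ← mapC_mul', hGSigG, mapC_one']
      · rw [Matrix.mul_smul, Matrix.smul_mul]
        congr 1
        rw [← mapC_mul', ← mapC_mul', hM]
    rw [hconj] at h2
    -- key bound
    have key : ∀ y : (Fin n ⊕ Fin n) → ℝ,
        (M *ᵥ y) ⬝ᵥ (M *ᵥ y) ≤ (2/ℏ)^2 * (y ⬝ᵥ y) := by
      intro y
      set c : ℝ := 2/ℏ with hc
      set u : (Fin n ⊕ Fin n) → ℝ := M *ᵥ y with hu
      have f1 : y ⬝ᵥ u = 0 := by
        have h1 := skew_dot' hMskew y y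
        have h3 : (M *ᵥ y) ⬝ᵥ y = y ⬝ᵥ (M *ᵥ y) := dotProduct_comm _ _
        rw [hu]
        linarith
      have f1' : u ⬝ᵥ y = 0 := by rw [dotProduct_comm]; exact f1
      have f2 : u ⬝ᵥ (M *ᵥ u) = 0 := by
        have h1 := skew_dot' hMskew u u
        have h3 : (M *ᵥ u) ⬝ᵥ u = u ⬝ᵥ (M *ᵥ u) := dotProduct_comm _ _
        linarith
      have f3 : y ⬝ᵥ (M *ᵥ u) = -(u ⬝ᵥ u) := by
        have h1 := skew_dot' hMskew y u
        rw [← hu] at h1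
        rw [h1]
      set yc : (Fin n ⊕ Fin n) → ℂ := fun i => ((y i : ℝ) : ℂ) with hyc
      set uc : (Fin n ⊕ Fin n) → ℂ := fun i => ((u i : ℝ) : ℂ) with huc
      set v : (Fin n ⊕ Fin n) → ℂ := (c:ℂ) • yc - Complex.I • uc with hv
      have h0 := h2.dotProduct_mulVec_nonneg v
      have hstar : star v = (c:ℂ) • yc + Complex.I • uc := by
        funext i
        rw [hv]
        simp [hyc, huc, Complex.ext_iff]
      have hMyc : (M.map Complex.ofReal) *ᵥ yc = uc := by
        rw [hyc, mulVecC']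
      have hMuc : (M.map Complex.ofReal) *ᵥ uc = fun i => (((M *ᵥ u) i : ℝ) : ℂ) := by
        rw [huc, mulVecC']
      have hval : star v ⬝ᵥ ((1 + (Complex.I * (ℏ:ℂ)/2) • M.map Complex.ofReal) *ᵥ v)
          = ((c^2*(y ⬝ᵥ y) + (u ⬝ᵥ u) - ℏ * c * (u ⬝ᵥ u) : ℝ) : ℂ) := by
        rw [hstar, add_mulVec, Matrix.one_mulVec, Matrix.smul_mulVec]
        rw [hv, Matrix.mulVec_sub, Matrix.mulVec_smul, Matrix.mulVec_smul, hMyc, hMuc]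
        simp only [dotProduct_add, add_dotProduct, dotProduct_sub, sub_dotProduct,
          dotProduct_smul, smul_dotProduct, smul_eq_mul, hyc, huc, dotC']
        rw [f1, f1', f2, f3]
        push_cast
        ring_nf
        simp only [Complex.I_sq]
        ring
      rw [hval, Complex.zero_le_real] at h0
      have hc2 : ℏ * c = 2 := by rw [hc]; field_simp
      rw [hc2] at h0
      linarith
    -- |M| machinery
    have hB : (Mᵀ * M).PosSemidef := by
      have h3 := Matrix.posSemidef_conjTranspose_mul_self M
      rwa [Matrix.conjTranspose_eq_transpose_of_trivial] at h3
    set absM := hB.sqrt with habsdef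
    have habs : absM.PosSemidef := hB.posSemidef_sqrt
    have habs2 : absM * absM = Mᵀ * M := hB.sqrt_mul_self
    have habsSym : absMᵀ = absM := by
      have h3 := habs.1
      rwa [Matrix.IsHermitian, Matrix.conjTranspose_eq_transpose_of_trivial] at h3
    have hBe : Mᵀ * M = -(M * M) := by rw [hMskew, Matrix.neg_mul]
    have hMB : M * (Mᵀ * M) = (Mᵀ * M) * M := by
      rw [hBe, Matrix.mul_neg, Matrix.neg_mul]
      exact congrArg Neg.neg (Matrix.mul_assoc M M M).symm
    have hMabs : M * absM = absM * M := commute_sqrt' hB hMB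
    have hdetB : (Mᵀ * M).det ≠ 0 := by
      rw [Matrix.det_mul, Matrix.det_transpose]
      exact mul_ne_zero hdetM hdetM
    have hdetabs : absM.det ≠ 0 := by
      intro h0
      apply hdetB
      rw [← habs2, Matrix.det_mul, h0, zero_mul]
    clear_value absM
    set Rt := habs.sqrt with hRtdef
    have hRtps : Rt.PosSemidef := habs.posSemidef_sqrt
    have hRt2 : Rt * Rt = absM := habs.sqrt_mul_self
    have hRtSym : Rtᵀ = Rt := by
      have h3 := hRtps.1
      rwa [Matrix.IsHermitian, Matrix.conjTranspose_eq_transpose_of_trivial] at h3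
    have hdetRt : IsUnit Rt.det := by
      rw [isUnit_iff_ne_zero]
      intro h0
      apply hdetabs
      rw [← hRt2, Matrix.det_mul, h0, zero_mul]
    clear_value Rt
    set Ri := Rt⁻¹ with hRidef
    have hRiRt : Ri * Rt = 1 := Matrix.nonsing_inv_mul Rt hdetRt
    have hRtRi : Rt * Ri = 1 := Matrix.mul_nonsing_inv Rt hdetRt
    have hRiSym : Riᵀ = Ri := by rw [hRidef, Matrix.transpose_nonsing_inv, hRtSym]
    have hMRt : M * Rt = Rt * M := by rw [hRtdef]; exact commute_sqrt' habs hMabs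
    have cRiRt : ∀ X, Ri * (Rt * X) = X := fun X => by
      rw [← Matrix.mul_assoc, hRiRt, Matrix.one_mul]
    have cRtRi : ∀ X, Rt * (Ri * X) = X := fun X => by
      rw [← Matrix.mul_assoc, hRtRi, Matrix.one_mul]
    have hMRi : M * Ri = Ri * M := by
      calc M * Ri = Ri * (Rt * (M * Ri)) := (cRiRt _).symm
        _ = Ri * (Rt * M * Ri) := by rw [Matrix.mul_assoc Rt M Ri]
        _ = Ri * (M * Rt * Ri) := by rw [hMRt]
        _ = Ri * (M * (Rt * Ri)) := by rw [Matrix.mul_assoc]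
        _ = Ri * M := by rw [hRtRi, Matrix.mul_one]
    have hMRi' : ∀ X, M * (Ri * X) = Ri * (M * X) := fun X => by
      rw [← Matrix.mul_assoc, hMRi, Matrix.mul_assoc]
    clear_value Ri
    set K := Ri * M * Ri with hK
    have hKskew : Kᵀ = -K := by
      rw [hK, Matrix.transpose_mul, Matrix.transpose_mul, hRiSym, hMskew]
      simp only [Matrix.neg_mul, Matrix.mul_neg, Matrix.mul_assoc]
    have hMM : M * M = -(Rt * (Rt * (Rt * Rt))) := by
      have h3 : M * M = -(Mᵀ * M) := by rw [hBe, neg_neg]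
      rw [h3, ← habs2, ← hRt2]
      rw [Matrix.mul_assoc]
    have hK2 : K * K = -1 := by
      calc K * K = Ri * (M * (Ri * (Ri * (M * Ri)))) := by
            rw [hK]; simp only [Matrix.mul_assoc]
        _ = Ri * (Ri * (Ri * (M * (M * Ri)))) := by rw [hMRi', hMRi']
        _ = Ri * (Ri * (Ri * ((M * M) * Ri))) := by rw [← Matrix.mul_assoc M M Ri]
        _ = -(Ri * (Ri * (Ri * (Rt * (Rt * (Rt * (Rt * Ri))))))) := by
            rw [hMM, Matrix.neg_mul]
            simp only [Matrix.mul_neg, Matrix.mul_assoc]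
        _ = -1 := by rw [cRiRt, cRiRt, cRiRt, hRtRi]
    clear_value K
    obtain ⟨W, hW1, hW2⟩ := exists_orthogonal_conj K hKskew hK2
    have hWW : W * Wᵀ = 1 := by rw [mul_eq_one_comm]; exact hW1
    have hdetW : W.det ≠ 0 := Matrix.det_ne_zero_of_left_inverse hW1
    set S := A * (Rt * W) with hS
    clear_value S
    have hSt : Sᵀ = Wᵀ * (Rt * A) := by
      rw [hS, Matrix.transpose_mul, Matrix.transpose_mul, hRtSym, hAsym]
      exact Matrix.mul_assoc Wᵀ Rt A
    have hRtKRt : Rt * (K * Rt) = M := by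
      rw [hK]
      calc Rt * (Ri * M * Ri * Rt) = Rt * (Ri * (M * (Ri * Rt))) := by
            simp only [Matrix.mul_assoc]
        _ = Rt * (Ri * (M * 1)) := by rw [hRiRt]
        _ = M := by rw [Matrix.mul_one, cRtRi]
    have hSJSt : S * stdJ n * Sᵀ = stdJ n := by
      calc S * stdJ n * Sᵀ
          = A * (Rt * (W * (stdJ n * (Wᵀ * (Rt * A))))) := by
            rw [hSt, hS]; simp only [Matrix.mul_assoc]
        _ = A * (Rt * ((W * stdJ n * Wᵀ) * (Rt * A))) := by
            simp only [Matrix.mul_assoc]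
        _ = A * (Rt * (K * (Rt * A))) := by rw [hW2]
        _ = A * ((Rt * (K * Rt)) * A) := by simp only [Matrix.mul_assoc]
        _ = A * (M * A) := by rw [hRtKRt]
        _ = (A * G) * (stdJ n * (G * A)) := by
            rw [hM]; simp only [Matrix.mul_assoc]
        _ = stdJ n := by rw [hAG, hGA, Matrix.one_mul, Matrix.mul_one]
    have hdetS : IsUnit S.det := by
      rw [isUnit_iff_ne_zero, hS, Matrix.det_mul, Matrix.det_mul]
      exact mul_ne_zero (isUnit_iff_ne_zero.mp hdetA)
        (mul_ne_zero (isUnit_iff_ne_zero.mp hdetRt) hdetW)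
    have hdetSt : IsUnit Sᵀ.det := by rwa [Matrix.det_transpose]
    have hsymp : IsSymplectic S := by
      unfold IsSymplectic
      have hinv : (S * stdJ n * Sᵀ)⁻¹ = (stdJ n)⁻¹ := by rw [hSJSt]
      have hJi : (stdJ n)⁻¹ = -(stdJ n) := Matrix.inv_eq_right_inv hJinv
      rw [Matrix.mul_inv_rev, Matrix.mul_inv_rev, hJi] at hinv
      have hinv2 : (Sᵀ)⁻¹ * (stdJ n * S⁻¹) = stdJ n := by
        have h4 := congrArg Neg.neg hinv
        simp only [Matrix.mul_neg, Matrix.neg_mul, neg_neg] at h4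
        exact h4
      calc Sᵀ * stdJ n * S = Sᵀ * (((Sᵀ)⁻¹ * (stdJ n * S⁻¹)) * S) := by
            rw [hinv2]; simp only [Matrix.mul_assoc]
        _ = (Sᵀ * (Sᵀ)⁻¹) * (stdJ n * (S⁻¹ * S)) := by simp only [Matrix.mul_assoc]
        _ = stdJ n := by
            rw [Matrix.mul_nonsing_inv _ hdetSt, Matrix.nonsing_inv_mul _ hdetS,
              Matrix.one_mul, Matrix.mul_one]
    refine ⟨S, hsymp, ?_⟩
    rintro w ⟨z, hz, rfl⟩
    rw [hball] at hz
    rw [Set.mem_setOf_eq]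
    have hGS : G * S = Rt * W := by
      rw [hS, ← Matrix.mul_assoc, hGA, Matrix.one_mul]
    set yv := W *ᵥ z with hyv
    have hvalq : Sig⁻¹ *ᵥ (S *ᵥ z) ⬝ᵥ (S *ᵥ z) = yv ⬝ᵥ (absM *ᵥ yv) := by
      rw [hquad, Matrix.mulVec_mulVec, hGS, ← Matrix.mulVec_mulVec]
      rw [← hRt2, ← Matrix.mulVec_mulVec]
      exact (sym_dot' hRtSym yv (Rt *ᵥ yv)).symm
    have ht0 : 0 ≤ yv ⬝ᵥ (absM *ᵥ yv) := by
      have h3 := habs.dotProduct_mulVec_nonneg yv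
      rwa [star_trivial] at h3
    have hcs := dot_cs' yv (absM *ᵥ yv)
    have habsabs : (absM *ᵥ yv) ⬝ᵥ (absM *ᵥ yv) = (M *ᵥ yv) ⬝ᵥ (M *ᵥ yv) := by
      calc (absM *ᵥ yv) ⬝ᵥ (absM *ᵥ yv) = yv ⬝ᵥ (absM *ᵥ (absM *ᵥ yv)) :=
            (sym_dot' habsSym yv (absM *ᵥ yv)).symm
        _ = yv ⬝ᵥ (Mᵀ *ᵥ (M *ᵥ yv)) := by
            rw [Matrix.mulVec_mulVec, habs2, ← Matrix.mulVec_mulVec]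
        _ = (M *ᵥ yv) ⬝ᵥ (M *ᵥ yv) := by
            rw [dotProduct_mulVec, Matrix.vecMul_transpose]
    have hyz : yv ⬝ᵥ yv = z ⬝ᵥ z := by
      rw [hyv]
      calc (W *ᵥ z) ⬝ᵥ (W *ᵥ z) = z ⬝ᵥ (Wᵀ *ᵥ (W *ᵥ z)) := by
            conv_rhs => rw [dotProduct_mulVec, Matrix.vecMul_transpose]
        _ = z ⬝ᵥ z := by rw [Matrix.mulVec_mulVec, hW1, Matrix.one_mulVec]
    have hkey := key yv
    rw [hvalq]
    set t := yv ⬝ᵥ (absM *ᵥ yv) with htdef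
    have hz0 : 0 ≤ z ⬝ᵥ z := dot_self_nonneg' z
    have h4 : t^2 ≤ (2/ℏ)^2 * (z ⬝ᵥ z)^2 := by
      calc t^2 ≤ (yv ⬝ᵥ yv) * ((absM *ᵥ yv) ⬝ᵥ (absM *ᵥ yv)) := hcs
        _ = (z ⬝ᵥ z) * ((M *ᵥ yv) ⬝ᵥ (M *ᵥ yv)) := by rw [hyz, habsabs]
        _ ≤ (z ⬝ᵥ z) * ((2/ℏ)^2 * (yv ⬝ᵥ yv)) := by
            apply mul_le_mul_of_nonneg_left hkey hz0
        _ = (2/ℏ)^2 * (z ⬝ᵥ z)^2 := by rw [hyz]; ring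
    have h7 : 0 ≤ (2/ℏ) * (z ⬝ᵥ z) := by positivity
    have h8 : t ^ 2 ≤ ((2/ℏ) * (z ⬝ᵥ z))^2 := by rw [mul_pow]; exact h4
    have h5 : t ≤ (2/ℏ) * (z ⬝ᵥ z) := by
      exact (pow_le_pow_iff_left₀ ht0 h7 two_ne_zero).mp h8
    have h6 : (2/ℏ) * (z ⬝ᵥ z) ≤ 2 := by
      have h9 : (2/ℏ) * (z ⬝ᵥ z) ≤ (2/ℏ) * ℏ := by
        apply mul_le_mul_of_nonneg_left hz (by positivity)
      have h10 : (2/ℏ) * ℏ = 2 := by field_simp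
      linarith
    linarith

  · rintro ⟨S, hS, hsub⟩
    have hSdet2 : S.det * S.det = 1 := by
      have h1 := congrArg Matrix.det hS
      rw [Matrix.det_mul, Matrix.det_mul, Matrix.det_transpose] at h1
      have h2 : S.det * S.det * (stdJ n).det = 1 * (stdJ n).det := by
        rw [one_mul]
        linear_combination h1
      exact mul_right_cancel₀ hdetJ h2
    have hdetS : IsUnit S.det := by
      rw [isUnit_iff_ne_zero]
      intro h0
      rw [h0, zero_mul] at hSdet2
      exact zero_ne_one hSdet2
    have hdetSt : IsUnit Sᵀ.det := by rwa [Matrix.det_transpose]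
    have hSJSt : S * stdJ n * Sᵀ = stdJ n := by
      have hinv : (Sᵀ * stdJ n * S)⁻¹ = (stdJ n)⁻¹ := by rw [hS]
      have hJi : (stdJ n)⁻¹ = -(stdJ n) := Matrix.inv_eq_right_inv hJinv
      rw [Matrix.mul_inv_rev, Matrix.mul_inv_rev, hJi] at hinv
      have hinv2 : S⁻¹ * (stdJ n * (Sᵀ)⁻¹) = stdJ n := by
        have h4 := congrArg Neg.neg hinv
        simp only [Matrix.mul_neg, Matrix.neg_mul, neg_neg] at h4
        exact h4
      calc S * stdJ n * Sᵀ = S * ((S⁻¹ * (stdJ n * (Sᵀ)⁻¹)) * Sᵀ) := by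
            rw [hinv2]; simp only [Matrix.mul_assoc]
        _ = (S * S⁻¹) * (stdJ n * ((Sᵀ)⁻¹ * Sᵀ)) := by simp only [Matrix.mul_assoc]
        _ = stdJ n := by
            rw [Matrix.mul_nonsing_inv _ hdetS, Matrix.nonsing_inv_mul _ hdetSt,
              Matrix.one_mul, Matrix.mul_one]
    -- quadratic bound from the inclusion
    have hq : ∀ z : (Fin n ⊕ Fin n) → ℝ,
        (ℏ/2) * (((G * S) *ᵥ z) ⬝ᵥ ((G * S) *ᵥ z)) ≤ z ⬝ᵥ z := by
      intro z
      rcases eq_or_ne (z ⬝ᵥ z) 0 with h0 | h0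
      · have hz0 : z = 0 := dotProduct_self_eq_zero.mp h0
        rw [hz0]
        simp
      · have hzpos : 0 < z ⬝ᵥ z := lt_of_le_of_ne (dot_self_nonneg' z) (Ne.symm h0)
        set t : ℝ := Real.sqrt (ℏ / (z ⬝ᵥ z)) with htd
        have ht2 : t^2 = ℏ/(z ⬝ᵥ z) := Real.sq_sqrt (by positivity)
        have htpos : 0 < t := Real.sqrt_pos.mpr (by positivity)
        have hmem : t • z ∈ ballPhase n (Real.sqrt ℏ) := by
          rw [hball]
          have : (t • z) ⬝ᵥ (t • z) = t^2 * (z ⬝ᵥ z) := by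
            rw [smul_dotProduct, dotProduct_smul, smul_eq_mul, smul_eq_mul]; ring
          rw [this, ht2]
          rw [div_mul_cancel₀ _ h0]
        have hs := hsub ⟨t • z, hmem, rfl⟩
        rw [Set.mem_setOf_eq] at hs
        have hexp : Sig⁻¹ *ᵥ (S *ᵥ (t • z)) ⬝ᵥ (S *ᵥ (t • z))
            = t^2 * (((G * S) *ᵥ z) ⬝ᵥ ((G * S) *ᵥ z)) := by
          rw [Matrix.mulVec_smul, hquad, Matrix.mulVec_smul, smul_dotProduct, dotProduct_smul,
            smul_eq_mul, smul_eq_mul, Matrix.mulVec_mulVec]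
          ring
        rw [hexp, ht2] at hs
        have h5 := mul_le_mul_of_nonneg_right hs hzpos.le
        rw [one_mul] at h5
        calc (ℏ/2) * (((G * S) *ᵥ z) ⬝ᵥ ((G * S) *ᵥ z))
            = 1/2 * (ℏ/(z ⬝ᵥ z) * (((G * S) *ᵥ z) ⬝ᵥ ((G * S) *ᵥ z))) * (z ⬝ᵥ z) := by
              field_simp
          _ ≤ z ⬝ᵥ z := h5
    have hq' : ∀ z : (Fin n ⊕ Fin n) → ℝ,
        (ℏ/2) * (((G * S)ᵀ *ᵥ z) ⬝ᵥ ((G * S)ᵀ *ᵥ z)) ≤ z ⬝ᵥ z := by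
      intro z
      set u := (G * S)ᵀ *ᵥ z with hud
      have h1 : u ⬝ᵥ u = ((G * S) *ᵥ u) ⬝ᵥ z := by
        conv_lhs => rw [hud]
        conv_lhs => rw [dotProduct_mulVec, Matrix.vecMul_transpose]
      have h2 := dot_cs' ((G * S) *ᵥ u) z
      have h3 := hq u
      have hu0 : 0 ≤ u ⬝ᵥ u := dot_self_nonneg' u
      have hz0 : 0 ≤ z ⬝ᵥ z := dot_self_nonneg' z
      have hQ0 : 0 ≤ ((G * S) *ᵥ u) ⬝ᵥ ((G * S) *ᵥ u) := dot_self_nonneg' _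
      rcases eq_or_ne (u ⬝ᵥ u) 0 with h0 | h0
      · rw [h0, mul_zero]
        exact hz0
      · have hupos : 0 < u ⬝ᵥ u := lt_of_le_of_ne hu0 (Ne.symm h0)
        have h4 := mul_le_mul_of_nonneg_right h3 hz0
        have h9 : (u ⬝ᵥ u)^2 ≤ (((G * S) *ᵥ u) ⬝ᵥ ((G * S) *ᵥ u)) * (z ⬝ᵥ z) := by
          rw [h1]; exact h2
        have h10 := mul_le_mul_of_nonneg_left h9 (by positivity : (0:ℝ) ≤ ℏ/2)
        have h11 : ℏ/2 * ((((G * S) *ᵥ u) ⬝ᵥ ((G * S) *ᵥ u)) * (z ⬝ᵥ z))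
            ≤ (u ⬝ᵥ u) * (z ⬝ᵥ z) := by
          calc ℏ/2 * ((((G * S) *ᵥ u) ⬝ᵥ ((G * S) *ᵥ u)) * (z ⬝ᵥ z))
              = (ℏ/2 * (((G * S) *ᵥ u) ⬝ᵥ ((G * S) *ᵥ u))) * (z ⬝ᵥ z) := by ring
            _ ≤ (u ⬝ᵥ u) * (z ⬝ᵥ z) := h4
        nlinarith [h10, h11, hupos]
    have hR : (Sig - (ℏ/2) • (S * Sᵀ)).PosSemidef := by
      rw [Matrix.posSemidef_iff_dotProduct_mulVec]
      constructor
      · rw [Matrix.IsHermitian, Matrix.conjTranspose_eq_transpose_of_trivial,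
          Matrix.transpose_sub, Matrix.transpose_smul, Matrix.transpose_mul,
          Matrix.transpose_transpose, hSigSym]
      · intro x
        rw [star_trivial]
        have hexp : x ⬝ᵥ ((Sig - (ℏ/2) • (S * Sᵀ)) *ᵥ x)
            = (A *ᵥ x) ⬝ᵥ (A *ᵥ x) - (ℏ/2) * ((Sᵀ *ᵥ x) ⬝ᵥ (Sᵀ *ᵥ x)) := by
          rw [Matrix.sub_mulVec, dotProduct_sub, Matrix.smul_mulVec, dotProduct_smul,
            smul_eq_mul]
          congr 1
          · rw [← hAA, ← Matrix.mulVec_mulVec]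
            exact sym_dot' hAsym x (A *ᵥ x)
          · congr 1
            rw [← Matrix.mulVec_mulVec, dotProduct_mulVec, ← Matrix.mulVec_transpose]
        have h5 := hq' (A *ᵥ x)
        have hGSA : (G * S)ᵀ *ᵥ (A *ᵥ x) = Sᵀ *ᵥ x := by
          have hGAx : G *ᵥ (A *ᵥ x) = x := by
            rw [Matrix.mulVec_mulVec, hGA, Matrix.one_mulVec]
          rw [Matrix.transpose_mul, hGsym, ← Matrix.mulVec_mulVec, hGAx]
        rw [hGSA] at h5
        rw [hexp]
        linarith
    set Jc := (stdJ n).map Complex.ofReal with hJc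
    have hJc2 : Jc * Jc = -1 := by rw [hJc, ← mapC_mul', hJ2, mapC_neg_one']
    have hJcH : Jcᴴ = -Jc := by
      rw [hJc, mapC_conjT', hJskew]
      ext i j
      simp
    set Dm := (1 : Matrix (Fin n ⊕ Fin n) (Fin n ⊕ Fin n) ℂ) + Complex.I • Jc with hDm
    have hDH : Dmᴴ = Dm := by
      rw [hDm, Matrix.conjTranspose_add, Matrix.conjTranspose_one, Matrix.conjTranspose_smul,
        hJcH, Complex.star_def, Complex.conj_I]
      rw [neg_smul, smul_neg, neg_neg]
    have hD2 : Dm * Dm = (2:ℂ) • Dm := by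
      rw [hDm]
      rw [Matrix.mul_add, Matrix.add_mul, Matrix.add_mul]
      simp only [Matrix.one_mul, Matrix.mul_one, Matrix.smul_mul, Matrix.mul_smul, smul_smul,
        Complex.I_mul_I, hJc2]
      module
    have hDpsd : Dm.PosSemidef := by
      refine Matrix.PosSemidef.of_dotProduct_mulVec_nonneg hDH fun x => ?_
      have h6 := (Matrix.posSemidef_conjTranspose_mul_self Dm).dotProduct_mulVec_nonneg x
      rw [hDH, hD2, Matrix.smul_mulVec, dotProduct_smul, smul_eq_mul] at h6
      have h7 : (0:ℂ) ≤ ((1/2 : ℝ) : ℂ) := by rw [Complex.zero_le_real]; norm_num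
      have h8 := mul_nonneg h7 h6
      rw [← mul_assoc] at h8
      norm_num at h8
      exact h8
    set sc : ℂ := ((Real.sqrt (ℏ/2) : ℝ) : ℂ) with hsc
    set Cm := sc • (S.map Complex.ofReal) with hCm
    have hCmH : Cmᴴ = sc • (Sᵀ.map Complex.ofReal) := by
      rw [hCm, Matrix.conjTranspose_smul, mapC_conjT', hsc]
      congr 1
      exact Complex.conj_ofReal _
    have hsc2 : sc * sc = ((ℏ/2 : ℝ) : ℂ) := by
      rw [hsc, ← Complex.ofReal_mul, Real.mul_self_sqrt (by positivity)]
    have hSDS : (S.map Complex.ofReal) * Dm * (Sᵀ.map Complex.ofReal)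
        = (S * Sᵀ).map Complex.ofReal + Complex.I • Jc := by
      rw [hDm, Matrix.mul_add, Matrix.add_mul, Matrix.mul_one, ← mapC_mul']
      congr 1
      rw [Matrix.mul_smul, Matrix.smul_mul]
      congr 1
      rw [hJc, ← mapC_mul', ← mapC_mul', hSJSt]
    have hkey : Sig.map Complex.ofReal + (Complex.I * (ℏ:ℂ)/2) • Jc
        = (Sig - (ℏ/2) • (S * Sᵀ)).map Complex.ofReal + Cm * Dm * Cmᴴ := by
      rw [hCmH, hCm, Matrix.smul_mul, Matrix.smul_mul, Matrix.mul_smul, hSDS]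
      rw [mapC_sub', mapC_smul']
      rw [smul_smul, smul_add]
      have hsc3 : sc * sc * Complex.I = Complex.I * (ℏ:ℂ)/2 := by
        rw [hsc2]
        push_cast
        ring
      rw [smul_smul, hsc3, hsc2]
      module
    rw [hkey]
    exact (psd_mapC' hR).add (hDpsd.mul_mul_conjTranspose_same Cm)
end
end

section
/- (Robertson–Schrödinger inequalities.) Let ħ > 0 and let Σ be a real symmetric 2n×2n matrix, written in block form with entries Σ_{j,k}, such that the complex Hermitian matrix Σ + (iħ/2)J is positive semidefinite. Then for every j = 1, …, n, writing (Δx_j)² = Σ_{j,j}, (Δp_j)² = Σ_{n+j,n+j}, and Δ(x_j,p_j) = Σ_{j,n+j}, one has (Δx_j)²(Δp_j)² ≥ Δ(x_j,p_j)² + ħ²/4. -/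
/-!
Every principal `2 × 2` minor of a positive semidefinite Hermitian matrix is nonnegative. For the
minor of `Σ + (iℏ/2)J` on the pair `(x_j, p_j)` this reads
`Σ_{x_j x_j} Σ_{p_j p_j} - |Σ_{x_j p_j} + iℏ/2|² ≥ 0`, which is the claimed inequality.
-/

open Matrix
open scoped ComplexOrder

noncomputable section

theorem Matrix.PosSemidef.norm_apply_sq_le {𝕜 ι : Type*} [RCLike 𝕜] [Fintype ι]
    {A : Matrix ι ι 𝕜} (hA : A.PosSemidef) (i k : ι) :
    ‖A i k‖ ^ 2 ≤ RCLike.re (A i i) * RCLike.re (A k k) := by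
  classical
  have hdet := (hA.submatrix ![i, k]).det_nonneg
  have hki : A k i = star (A i k) := by
    simpa using (congrFun (congrFun hA.isHermitian k) i).symm
  simp only [det_fin_two, submatrix_apply, cons_val_zero, cons_val_one, hki, RCLike.star_def,
    RCLike.mul_conj] at hdet
  rw [← hA.isHermitian.coe_re_apply_self i, ← hA.isHermitian.coe_re_apply_self k] at hdet
  exact sub_nonneg.mp (RCLike.ofReal_nonneg (K := 𝕜).mp (by exact_mod_cast hdet))

section stdJ

variable {n : ℕ} (Sig : Matrix (Fin n ⊕ Fin n) (Fin n ⊕ Fin n) ℝ) (c : ℂ) (j : Fin n)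

theorem map_ofReal_add_smul_stdJ_apply_inl_inl :
    (Sig.map Complex.ofReal + c • (stdJ n).map Complex.ofReal) (Sum.inl j) (Sum.inl j)
      = Sig (Sum.inl j) (Sum.inl j) := by
  simp [stdJ]

theorem map_ofReal_add_smul_stdJ_apply_inr_inr :
    (Sig.map Complex.ofReal + c • (stdJ n).map Complex.ofReal) (Sum.inr j) (Sum.inr j)
      = Sig (Sum.inr j) (Sum.inr j) := by
  simp [stdJ]

theorem map_ofReal_add_smul_stdJ_apply_inl_inr :
    (Sig.map Complex.ofReal + c • (stdJ n).map Complex.ofReal) (Sum.inl j) (Sum.inr j)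
      = Sig (Sum.inl j) (Sum.inr j) + c := by
  simp [stdJ]

end stdJ

theorem statement19_general (n : ℕ) (ℏ : ℝ)
    (Sig : Matrix (Fin n ⊕ Fin n) (Fin n ⊕ Fin n) ℝ)
    (hQ : (Sig.map Complex.ofReal
        + (Complex.I * (ℏ : ℂ) / 2) • (stdJ n).map Complex.ofReal).PosSemidef) :
    ∀ j : Fin n,
      Sig (Sum.inl j) (Sum.inr j) ^ 2 + ℏ ^ 2 / 4
        ≤ Sig (Sum.inl j) (Sum.inl j) * Sig (Sum.inr j) (Sum.inr j) := by
  intro j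
  have hminor := hQ.norm_apply_sq_le (Sum.inl j) (Sum.inr j)
  have hxp : (Sig (Sum.inl j) (Sum.inr j) : ℂ) + Complex.I * ℏ / 2
      = Sig (Sum.inl j) (Sum.inr j) + ((ℏ / 2 : ℝ) : ℂ) * Complex.I := by
    push_cast
    ring
  rw [map_ofReal_add_smul_stdJ_apply_inl_inl, map_ofReal_add_smul_stdJ_apply_inr_inr,
    map_ofReal_add_smul_stdJ_apply_inl_inr, hxp, Complex.sq_norm, Complex.normSq_add_mul_I,
    RCLike.re_to_complex, RCLike.re_to_complex, Complex.ofReal_re, Complex.ofReal_re] at hminor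
  linarith

/-- Robertson–Schrödinger inequalities: if the symmetric matrix `Σ` satisfies the
quantum condition `Σ + (iℏ/2)J ≥ 0`, then for each `j`,
`(Δx_j)²(Δp_j)² ≥ Δ(x_j,p_j)² + ℏ²/4`, where `(Δx_j)² = Σ_{x_j x_j}`,
`(Δp_j)² = Σ_{p_j p_j}` and `Δ(x_j,p_j) = Σ_{x_j p_j}`. -/
theorem statement19 (n : ℕ) (ℏ : ℝ) (hℏ : 0 < ℏ)
    (Sig : Matrix (Fin n ⊕ Fin n) (Fin n ⊕ Fin n) ℝ) (hSym : Sig.IsSymm)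
    (hQ : (Sig.map Complex.ofReal
        + (Complex.I * (ℏ : ℂ) / 2) • (stdJ n).map Complex.ofReal).PosSemidef) :
    ∀ j : Fin n,
      Sig (Sum.inl j) (Sum.inr j) ^ 2 + ℏ ^ 2 / 4
        ≤ Sig (Sum.inl j) (Sum.inl j) * Sig (Sum.inr j) (Sum.inr j) :=
  statement19_general n ℏ Sig hQ
end
end
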